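/- Relations between θ and the natural average main effects (Remark 1): with θ := Σ_{g=0}^{g_max} P(G=g|S=1) · E[τ(g)|S=1]: (a) if under P(·|S=2) each τ(g) is uncorrelated with 1{G=g} (as holds when τ(g) is independent of G given S=2), if G is independent of S, and if E[τ(g)|S=1] = E[τ(g)|S=2] for all g, then θ = φ₂; (b) if under P(·|S=1) each τ(g) is uncorrelated with 1{G=g}, then θ = φ₁. -/

import Mathlib

open MeasureTheory ProbabilityTheory Set

noncomputable def ind {Ω : Type*} (s : Set Ω) : Ω → ℝ := s.indicator fun _ => 1

noncomputable def cov {Ω : Type*} {m : MeasurableSpace Ω} (μ : MeasureTheory.Measure Ω)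
    (f g : Ω → ℝ) : ℝ :=
  (∫ ω, f ω * g ω ∂μ) - (∫ ω, f ω ∂μ) * ∫ ω, g ω ∂μ

/-!
Write `τ g = Y^(1,g) − Y^(0,g)`. By consistency `Y^(1) − Y^(0) = Σ_g 1{G=g}·τ g`, and a vanishing
covariance is exactly `E[1{G=g}·τ g] = P(G=g)·E[τ g]`, so in each population `s` the natural effect
is `φ_s = Σ_g P(G=g|S=s)·E[τ g|S=s]`. For `s = 1` this is `θ`. For `s = 2`, independence of `G` and
`S` gives `P(G=g|S=2) = P(G=g) = P(G=g|S=1)`, and the conditional means agree by assumption.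
-/

section

variable {Ω : Type*} {mΩ : MeasurableSpace Ω}

lemma ind_mul_eq_indicator (s : Set Ω) (f : Ω → ℝ) :
    (fun ω => ind s ω * f ω) = s.indicator f := by
  ext ω
  by_cases h : ω ∈ s <;> simp [ind, h]

lemma integral_ind {ν : Measure Ω} {s : Set Ω} (hs : MeasurableSet s) :
    ∫ ω, ind s ω ∂ν = ν.real s :=
  integral_indicator_one hs

lemma integral_ind_mul_of_cov_eq_zero {ν : Measure Ω} {f : Ω → ℝ} {s : Set Ω}
    (hs : MeasurableSet s) (hcov : cov ν f (ind s) = 0) :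
    ∫ ω, ind s ω * f ω ∂ν = ν.real s * ∫ ω, f ω ∂ν := by
  rw [cov, sub_eq_zero, integral_ind hs] at hcov
  simp_rw [mul_comm (ind s _)]
  rw [hcov, mul_comm]

lemma integral_sum_ind_mul_of_cov_eq_zero {ι : Type*} {ν : Measure Ω} (t : Finset ι)
    {s : ι → Set Ω} {f : ι → Ω → ℝ} (hs : ∀ i ∈ t, MeasurableSet (s i))
    (hf : ∀ i ∈ t, Integrable (f i) ν) (hcov : ∀ i ∈ t, cov ν (f i) (ind (s i)) = 0) :
    ∫ ω, ∑ i ∈ t, ind (s i) ω * f i ω ∂ν = ∑ i ∈ t, ν.real (s i) * ∫ ω, f i ω ∂ν := by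
  rw [integral_finsetSum]
  · exact Finset.sum_congr rfl fun i hi => integral_ind_mul_of_cov_eq_zero (hs i hi) (hcov i hi)
  · intro i hi
    rw [ind_mul_eq_indicator]
    exact (hf i hi).indicator (hs i hi)

lemma MeasureTheory.Integrable.cond {E : Type*} [NormedAddCommGroup E] {μ : Measure Ω}
    {f : Ω → E} {s : Set Ω} (hf : Integrable f μ) (hs : μ s ≠ 0) : Integrable f μ[|s] :=
  hf.restrict.smul_measure (ENNReal.inv_ne_top.2 hs)

lemma ProbabilityTheory.IndepFun.cond_preimage_eq {α β : Type*} [MeasurableSpace α]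
    [MeasurableSpace β] {μ : Measure Ω} [IsFiniteMeasure μ] {X : Ω → α} {Y : Ω → β}
    (h : IndepFun X Y μ) (hX : Measurable X) {A : Set α} {B : Set β} (hA : MeasurableSet A) (hB : MeasurableSet B)
    (hμB : μ (Y ⁻¹' B) ≠ 0) :
    μ[X ⁻¹' A | Y ⁻¹' B] = μ (X ⁻¹' A) := by
  rw [cond_apply' (hX hA), inter_comm, h.measure_inter_preimage_eq_mul _ _ hA hB, mul_comm,
    mul_assoc, ENNReal.mul_inv_cancel hμB (measure_ne_top _ _), mul_one]

end

theorem theta_relations_general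
    {Ω : Type*} [mΩ : MeasurableSpace Ω]
    (μ : Measure Ω) [IsProbabilityMeasure μ]
    (gmax : ℕ)
    (S G : Ω → ℕ)
    (hSpos : ∀ s, (s = 1 ∨ s = 2) → 0 < μ {ω | S ω = s})
    (hGmeas : Measurable G)
    (Ypo : ℕ → ℕ → Ω → ℝ)
    (hYposq : ∀ a ≤ 1, ∀ g ≤ gmax, MemLp (Ypo a g) 2 μ)
    (Ya : ℕ → Ω → ℝ)
    (hYa : ∀ a ω, Ya a ω = ∑ g ∈ Finset.range (gmax + 1), ind {ω' | G ω' = g} ω * Ypo a g ω)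
    (θ : ℝ)
    (hθ : θ = ∑ g ∈ Finset.range (gmax + 1),
        ((μ[|{ω | S ω = 1}]) {ω | G ω = g}).toReal
          * ∫ ω, (Ypo 1 g ω - Ypo 0 g ω) ∂(μ[|{ω | S ω = 1}])) :
    -- (a)
    ((∀ g ≤ gmax,
        cov (μ[|{ω | S ω = 2}]) (fun ω => Ypo 1 g ω - Ypo 0 g ω) (ind {ω | G ω = g}) = 0) →
      IndepFun G S μ →
      (∀ g ≤ gmax,
        (∫ ω, (Ypo 1 g ω - Ypo 0 g ω) ∂(μ[|{ω | S ω = 1}]))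
          = ∫ ω, (Ypo 1 g ω - Ypo 0 g ω) ∂(μ[|{ω | S ω = 2}])) →
      θ = ∫ ω, (Ya 1 ω - Ya 0 ω) ∂(μ[|{ω | S ω = 2}]))
    -- (b)
    ∧ ((∀ g ≤ gmax,
        cov (μ[|{ω | S ω = 1}]) (fun ω => Ypo 1 g ω - Ypo 0 g ω) (ind {ω | G ω = g}) = 0) →
      θ = ∫ ω, (Ya 1 ω - Ya 0 ω) ∂(μ[|{ω | S ω = 1}])) := by
  have hS_ne : ∀ s, (s = 1 ∨ s = 2) → μ {ω | S ω = s} ≠ 0 := fun s hs => (hSpos s hs).ne'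
  have natural_effect : ∀ s, (s = 1 ∨ s = 2) →
      (∀ g ≤ gmax,
        cov (μ[|{ω | S ω = s}]) (fun ω => Ypo 1 g ω - Ypo 0 g ω) (ind {ω | G ω = g}) = 0) →
      ∫ ω, (Ya 1 ω - Ya 0 ω) ∂(μ[|{ω | S ω = s}]) =
        ∑ g ∈ Finset.range (gmax + 1), ((μ[|{ω | S ω = s}]) {ω | G ω = g}).toReal
          * ∫ ω, (Ypo 1 g ω - Ypo 0 g ω) ∂(μ[|{ω | S ω = s}]) := by
    intro s hs hcov
    simp_rw [hYa, ← Finset.sum_sub_distrib, ← mul_sub]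
    refine integral_sum_ind_mul_of_cov_eq_zero _ (fun g _ => hGmeas (measurableSet_singleton g))
      (fun g hg => ?_) (fun g hg => hcov g (Finset.mem_range_succ_iff.mp hg))
    have hg' := Finset.mem_range_succ_iff.mp hg
    exact (((hYposq 1 le_rfl g hg').sub (hYposq 0 zero_le_one g hg')).integrable
      one_le_two).cond (hS_ne s hs)
  refine ⟨fun hcov hindep hmean => ?_, fun hcov => by rw [natural_effect 1 (.inl rfl) hcov, hθ]⟩
  rw [natural_effect 2 (.inr rfl) hcov, hθ]
  refine Finset.sum_congr rfl fun g hg => ?_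
  have hG_cond : ∀ s, (s = 1 ∨ s = 2) → μ[{ω | G ω = g} | {ω | S ω = s}] = μ {ω | G ω = g} :=
    fun s hs => hindep.cond_preimage_eq (A := {g}) (B := {s}) hGmeas
      (measurableSet_singleton g) (measurableSet_singleton s) (hS_ne s hs)
  rw [hG_cond 1 (.inl rfl), hG_cond 2 (.inr rfl), hmean g (Finset.mem_range_succ_iff.mp hg)]

/-- **Relations between θ and the natural average main effects (Remark 1).**  With
`θ = Σ_g P(G=g|S=1)·E[τ(g)|S=1]` and `τ(g) = Y^(1,g) − Y^(0,g)`: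
(a) if under `P(·|S=2)` each `τ(g)` is uncorrelated with `1{G=g}`, if `G` is independent of
`S`, and if `E[τ(g)|S=1] = E[τ(g)|S=2]` for all `g`, then `θ = φ₂`;
(b) if under `P(·|S=1)` each `τ(g)` is uncorrelated with `1{G=g}`, then `θ = φ₁`. -/
theorem theta_relations
    {Ω : Type*} [mΩ : MeasurableSpace Ω]
    (μ : Measure Ω) [IsProbabilityMeasure μ]
    (gmax : ℕ)
    (S A G : Ω → ℕ)
    (hS : ∀ ω, S ω = 1 ∨ S ω = 2) (hSmeas : Measurable S)
    (hSpos : ∀ s, (s = 1 ∨ s = 2) → 0 < μ {ω | S ω = s})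
    (hA : ∀ ω, A ω ≤ 1) (hG : ∀ ω, G ω ≤ gmax)
    (hAmeas : Measurable A) (hGmeas : Measurable G)
    (Ypo : ℕ → ℕ → Ω → ℝ)
    (hYpomeas : ∀ a ≤ 1, ∀ g ≤ gmax, Measurable (Ypo a g))
    (hYposq : ∀ a ≤ 1, ∀ g ≤ gmax, MemLp (Ypo a g) 2 μ)
    (Ya : ℕ → Ω → ℝ)
    (hYa : ∀ a ω, Ya a ω = ∑ g ∈ Finset.range (gmax + 1), ind {ω' | G ω' = g} ω * Ypo a g ω)
    (θ : ℝ)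
    (hθ : θ = ∑ g ∈ Finset.range (gmax + 1),
        ((μ[|{ω | S ω = 1}]) {ω | G ω = g}).toReal
          * ∫ ω, (Ypo 1 g ω - Ypo 0 g ω) ∂(μ[|{ω | S ω = 1}])) :
    -- (a)
    ((∀ g ≤ gmax,
        cov (μ[|{ω | S ω = 2}]) (fun ω => Ypo 1 g ω - Ypo 0 g ω) (ind {ω | G ω = g}) = 0) →
      IndepFun G S μ →
      (∀ g ≤ gmax,
        (∫ ω, (Ypo 1 g ω - Ypo 0 g ω) ∂(μ[|{ω | S ω = 1}]))
          = ∫ ω, (Ypo 1 g ω - Ypo 0 g ω) ∂(μ[|{ω | S ω = 2}])) →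
      θ = ∫ ω, (Ya 1 ω - Ya 0 ω) ∂(μ[|{ω | S ω = 2}]))
    -- (b)
    ∧ ((∀ g ≤ gmax,
        cov (μ[|{ω | S ω = 1}]) (fun ω => Ypo 1 g ω - Ypo 0 g ω) (ind {ω | G ω = g}) = 0) →
      θ = ∫ ω, (Ya 1 ω - Ya 0 ω) ∂(μ[|{ω | S ω = 1}])) :=
  theta_relations_general (mΩ := mΩ) μ gmax S G hSpos hGmeas Ypo hYposq Ya hYa θ hθ
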